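/- arXiv:1811.05677 — 2 statements merged into one kernel-verified Lean document; each statement's English description precedes it below -/
import Mathlib

section
/- For every closure model M and all formulas F₁, F₂ of SLCS, the formula F₁ S F₂ (surrounded) is logically equivalent to F₁ ∧ ¬ρ(¬(F₁ ∨ F₂))[¬F₂]: a point x satisfies the surrounded formula if and only if x satisfies F₁ and x does not satisfy 'may reach a point satisfying ¬(F₁ ∨ F₂) through points satisfying ¬F₂'. -/
/-- `π` is a path for relation `R`. -/
def IsPath {X : Type*} (R : X → X → Prop) (π : ℕ → X) : Prop :=
  ∀ i : ℕ, R (π i) (π (i + 1))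

/-- `x` may reach a point of `A` through points of `B`. -/
def MayReach {X : Type*} (R : X → X → Prop) (A B : Set X) (x : X) : Prop :=
  ∃ (π : ℕ → X) (ℓ : ℕ), IsPath R π ∧ π 0 = x ∧ π ℓ ∈ A ∧
    ∀ j : ℕ, 0 < j → j < ℓ → π j ∈ B

/-- `x` satisfies `A` surrounded by `B`. -/
def Surrounded {X : Type*} (R : X → X → Prop) (A B : Set X) (x : X) : Prop :=
  x ∈ A ∧ ∀ (π : ℕ → X) (ℓ : ℕ), IsPath R π → π 0 = x → π ℓ ∉ A →
    ∃ j : ℕ, 0 < j ∧ j ≤ ℓ ∧ π j ∈ B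

theorem mayReach_compl_union_iff {X : Type*} {R : X → X → Prop} {A B : Set X} {x : X}
    (hx : x ∈ A) :
    MayReach R (A ∪ B)ᶜ Bᶜ x ↔ ∃ (π : ℕ → X) (ℓ : ℕ), IsPath R π ∧ π 0 = x ∧ π ℓ ∉ A ∧
      ∀ j : ℕ, 0 < j → j ≤ ℓ → π j ∉ B := by
  constructor
  · rintro ⟨π, ℓ, hπ, h0, hℓ, hmid⟩
    rw [Set.compl_union] at hℓ
    refine ⟨π, ℓ, hπ, h0, hℓ.1, fun j hj hjℓ => ?_⟩
    rcases hjℓ.lt_or_eq with hlt | rfl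
    exacts [hmid j hj hlt, hℓ.2]
  · rintro ⟨π, ℓ, hπ, h0, hℓA, hB⟩
    have hℓ : 0 < ℓ := Nat.pos_of_ne_zero fun h => hℓA (h ▸ h0 ▸ hx)
    exact ⟨π, ℓ, hπ, h0, fun h => h.elim hℓA (hB ℓ hℓ le_rfl),
      fun j hj hjℓ => hB j hj hjℓ.le⟩

theorem surrounded_iff_not_mayReach_general {X : Type*} (R : X → X → Prop)
    (A B : Set X) (x : X) :
    Surrounded R A B x ↔
      (x ∈ A ∧ ¬ MayReach R ((A ∪ B)ᶜ) Bᶜ x) := by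
  refine and_congr_right fun hx => ?_
  rw [mayReach_compl_union_iff hx]
  push Not
  rfl

theorem surrounded_iff_not_mayReach {X : Type*} (R : X → X → Prop)
    (hrefl : ∀ x : X, R x x) (A B : Set X) (x : X) :
    Surrounded R A B x ↔
      (x ∈ A ∧ ¬ MayReach R ((A ∪ B)ᶜ) Bᶜ x) :=
  surrounded_iff_not_mayReach_general R A B x
end

section
/- In a quasi-discrete closure space with reflexive symmetric relation R, the set of points satisfying ρ A [B] ('may reach A through B') equals (N A) ∪ (N C), where N is the closure operator applied to a satisfaction set, and C is the union of all R-connected components of B that contain at least one point of N A. (Here the claim to prove: x satisfies ρ A [B] iff x ∈ C_R(A), or x ∈ C_R(C) where C is the union of connected components of B meeting C_R(A).) -/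
/-- The quasi-discrete closure operator generated by a relation `R`. -/
def CR {X : Type*} (R : X → X → Prop) (Y : Set X) : Set X :=
  Y ∪ {x | ∃ y ∈ Y, R y x}

/-- `R` restricted to the set `B`. -/
def RestrictRel {X : Type*} (R : X → X → Prop) (B : Set X) (a b : X) : Prop :=
  a ∈ B ∧ b ∈ B ∧ R a b

/-- Union of the connected components of `B` (w.r.t. the reflexive-transitive
closure of `R` restricted to `B`) containing at least one point of `C_R(A)`. -/
def CompsMeeting {X : Type*} (R : X → X → Prop) (A B : Set X) : Set X :=
  {y | y ∈ B ∧ ∃ z, Relation.ReflTransGen (RestrictRel R B) y z ∧ z ∈ CR R A}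

/-!
A path witnessing `ρ A [B]` from `x` in `ℓ ≥ 2` steps runs inside `B` from `π 1` to
`π (ℓ - 1)`, a neighbour of `π ℓ ∈ A`; so `π 1` lies in a component of `B` meeting
`C_R(A)` and `x` is a neighbour of it. Conversely, reflexivity lets a finite walk be prolonged
to an infinite path, and symmetry turns the closure relation `y R x` into a step from `x` to `y`.
-/

section

variable {X : Type*} {R : X → X → Prop} {A B Y : Set X} {x y : X}

lemma mem_CR_of_rel (hsymm : ∀ x y : X, R x y → R y x) (hxy : R x y) (hy : y ∈ Y) :
    x ∈ CR R Y :=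
  Or.inr ⟨y, hy, hsymm x y hxy⟩

lemma IsPath.cons {π : ℕ → X} (hπ : IsPath R π) (hx : R x (π 0)) :
    IsPath R (fun | 0 => x | n + 1 => π n)
  | 0 => hx
  | n + 1 => hπ n

lemma isPath_const (hrefl : ∀ x : X, R x x) (x : X) : IsPath R fun _ => x :=
  fun _ => hrefl x

lemma IsPath.reflTransGen_restrictRel {π : ℕ → X} (hπ : IsPath R π) {i k : ℕ} (hik : i ≤ k)
    (hB : ∀ j, i ≤ j → j ≤ k → π j ∈ B) :
    Relation.ReflTransGen (RestrictRel R B) (π i) (π k) := by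
  induction k, hik using Nat.le_induction with
  | base => exact .refl
  | succ k hik ih =>
    exact (ih fun j hij hjk => hB j hij (by omega)).tail
      ⟨hB k hik (by omega), hB (k + 1) (by omega) le_rfl, hπ k⟩

lemma mayReach_of_mem (hrefl : ∀ x : X, R x x) (hx : x ∈ A) : MayReach R A B x :=
  ⟨fun _ => x, 0, isPath_const hrefl x, rfl, hx, fun _ _ h => absurd h (Nat.not_lt_zero _)⟩

lemma mayReach_of_rel_of_mem (hrefl : ∀ x : X, R x x) (hxy : R x y) (hy : y ∈ A) :
    MayReach R A B x :=
  ⟨_, 1, (isPath_const hrefl y).cons hxy, rfl, hy, fun _ h₀ h₁ => absurd h₁ (by omega)⟩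

lemma MayReach.of_rel (hxy : R x y) (hy : y ∈ B) (h : MayReach R A B y) : MayReach R A B x := by
  obtain ⟨π, ℓ, hπ, rfl, hℓ, hB⟩ := h
  refine ⟨_, ℓ + 1, hπ.cons hxy, rfl, hℓ, ?_⟩
  rintro (_ | _ | j) _ hj
  · omega
  · exact hy
  · exact hB (j + 1) j.succ_pos (by omega)

lemma mayReach_of_mem_CR (hrefl : ∀ x : X, R x x) (hsymm : ∀ x y : X, R x y → R y x)
    (hx : x ∈ CR R A) : MayReach R A B x := by
  rcases hx with hx | ⟨y, hy, hyx⟩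
  · exact mayReach_of_mem hrefl hx
  · exact mayReach_of_rel_of_mem hrefl (hsymm y x hyx) hy

lemma mayReach_of_mem_compsMeeting (hrefl : ∀ x : X, R x x)
    (hsymm : ∀ x y : X, R x y → R y x) (hy : y ∈ CompsMeeting R A B) : MayReach R A B y := by
  obtain ⟨-, z, hyz, hz⟩ := hy
  induction hyz using Relation.ReflTransGen.head_induction_on with
  | refl => exact mayReach_of_mem_CR hrefl hsymm hz
  | head hstep _ ih => exact ih.of_rel hstep.2.2 hstep.2.1

lemma MayReach.mem_CR_union (hsymm : ∀ x y : X, R x y → R y x) (h : MayReach R A B x) :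
    x ∈ CR R A ∪ CR R (CompsMeeting R A B) := by
  obtain ⟨π, ℓ, hπ, rfl, hℓ, hB⟩ := h
  rcases ℓ with _ | _ | ℓ
  · exact Or.inl (Or.inl hℓ)
  · exact Or.inl (mem_CR_of_rel hsymm (hπ 0) hℓ)
  · have hchain : Relation.ReflTransGen (RestrictRel R B) (π 1) (π (ℓ + 1)) :=
      hπ.reflTransGen_restrictRel (by omega) fun j hj _ => hB j hj (by omega)
    have hlast : π (ℓ + 1) ∈ CR R A := mem_CR_of_rel hsymm (hπ (ℓ + 1)) hℓ
    exact Or.inr (mem_CR_of_rel hsymm (hπ 0) ⟨hB 1 one_pos (by omega), _, hchain, hlast⟩)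

end

theorem mayReach_eq_closure_components_general {X : Type*}
    (R : X → X → Prop) (hrefl : ∀ x : X, R x x)
    (hsymm : ∀ x y : X, R x y → R y x) (A B : Set X) (x : X) :
    MayReach R A B x ↔
      x ∈ CR R A ∪ CR R (CompsMeeting R A B) := by
  refine ⟨MayReach.mem_CR_union hsymm, ?_⟩
  rintro (hx | hx | ⟨y, hy, hyx⟩)
  · exact mayReach_of_mem_CR hrefl hsymm hx
  · exact mayReach_of_mem_compsMeeting hrefl hsymm hx
  · exact (mayReach_of_mem_compsMeeting hrefl hsymm hy).of_rel (hsymm y x hyx) hy.1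

theorem mayReach_eq_closure_components {X : Type*} [Fintype X]
    (R : X → X → Prop) (hrefl : ∀ x : X, R x x)
    (hsymm : ∀ x y : X, R x y → R y x) (A B : Set X) (x : X) :
    MayReach R A B x ↔
      x ∈ CR R A ∪ CR R (CompsMeeting R A B) :=
  mayReach_eq_closure_components_general R hrefl hsymm A B x
end
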